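/- arXiv:1301.3625 — 5 statements merged into one kernel-verified Lean document; each statement's English description precedes it below -/
import Mathlib

section
/- Let l ≥ 3 be an odd integer and ζ = exp(2πi/l) ∈ ℂ. Let M be the ((l−1)/2) × ((l−1)/2) complex matrix with entries M_{p,q} = ζ^{pq} − ζ^{−pq} for 1 ≤ p, q ≤ (l−1)/2. Then (det M)² = (−l)^{(l−1)/2}; in particular det M ≠ 0. -/
/-!
Writing `S(x) = ∑_{q=1}^{m} (x^q + x^{-q})` for an `l`-th root of unity `x`, `l = 2m + 1`, the
exponents `±q` run over all nonzero residues mod `l`, so `S(x) = -1` unless `x = 1`, where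
`S(1) = 2m`. Expanding `(a - a⁻¹)(b - b⁻¹)` shows that the `(p, r)` entry of `M Mᵀ` is
`S(ζ^{p+r}) - S(ζ^{p-r})`, hence `M Mᵀ = -l • 1`, and taking determinants gives the result.
-/

open Finset Matrix

variable {K : Type*} [Field K]

lemma sub_inv_mul_sub_inv (a b : K) :
    (a - a⁻¹) * (b - b⁻¹) = (a * b + (a * b)⁻¹) - (a * b⁻¹ + (a * b⁻¹)⁻¹) := by
  rw [mul_inv, mul_inv, inv_inv]
  ring

lemma sum_pow_add_inv_pow_add_one {x : K} {m : ℕ} (hx : x ^ (2 * m + 1) = 1) :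
    ∑ q ∈ range m, (x ^ (q + 1) + x⁻¹ ^ (q + 1)) + 1 = ∑ k ∈ range (2 * m + 1), x ^ k := by
  have inv_pow_eq : ∀ q ∈ range m, x⁻¹ ^ (q + 1) = x ^ (m + (m - 1 - q) + 1) := by
    intro q hq
    rw [inv_pow]
    refine inv_eq_of_mul_eq_one_left ?_
    rw [← pow_add, ← hx]
    have := mem_range.mp hq
    congr 1
    omega
  rw [sum_add_distrib, sum_congr rfl inv_pow_eq, sum_range_reflect (fun j ↦ x ^ (m + j + 1)),
    sum_range_succ', two_mul, sum_range_add, pow_zero]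

lemma sum_pow_add_inv_pow_of_ne_one {x : K} {m : ℕ} (hx : x ^ (2 * m + 1) = 1) (hx1 : x ≠ 1) :
    ∑ q ∈ range m, (x ^ (q + 1) + x⁻¹ ^ (q + 1)) = -1 := by
  have geom : ∑ k ∈ range (2 * m + 1), x ^ k = 0 := by
    rw [geom_sum_eq hx1, hx, sub_self, zero_div]
  rw [eq_neg_iff_add_eq_zero, sum_pow_add_inv_pow_add_one hx, geom]

lemma sum_pow_add_inv_pow_one (m : ℕ) :
    ∑ q ∈ range m, ((1 : K) ^ (q + 1) + (1 : K)⁻¹ ^ (q + 1)) = 2 * m := by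
  simp [two_mul]

-- For `ζ = e^{2πi/l}` the entries are `2i sin(2πpq/l)`.
def sineMatrix (ζ : K) (m : ℕ) : Matrix (Fin m) (Fin m) K :=
  of fun p q ↦ ζ ^ ((p.1 + 1) * (q.1 + 1)) - ζ⁻¹ ^ ((p.1 + 1) * (q.1 + 1))

lemma sineMatrix_mul_transpose {ζ : K} {l m : ℕ} (hζ : IsPrimitiveRoot ζ l) (hl : l = 2 * m + 1) :
    sineMatrix ζ m * (sineMatrix ζ m)ᵀ = -(l : K) • 1 := by
  subst hl
  ext p r
  set u := ζ ^ (p.1 + 1)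
  set v := ζ ^ (r.1 + 1)
  have entry : ∀ q : Fin m, sineMatrix ζ m p q * sineMatrix ζ m r q =
      ((u * v) ^ (q.1 + 1) + (u * v)⁻¹ ^ (q.1 + 1)) -
        ((u * v⁻¹) ^ (q.1 + 1) + (u * v⁻¹)⁻¹ ^ (q.1 + 1)) := by
    intro q
    simp only [sineMatrix, of_apply, pow_mul, inv_pow, mul_pow]
    exact sub_inv_mul_sub_inv _ _
  have pow_root : ∀ n, (ζ ^ n) ^ (2 * m + 1) = 1 := fun n ↦ by
    rw [pow_right_comm, hζ.pow_eq_one, one_pow]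
  have huv : u * v ≠ 1 := by
    rw [← pow_add]
    exact hζ.pow_ne_one_of_pos_of_lt (by omega) (by omega)
  have huv_pow : (u * v) ^ (2 * m + 1) = 1 := by
    rw [← pow_add, pow_root]
  have huv_inv_pow : (u * v⁻¹) ^ (2 * m + 1) = 1 := by
    rw [mul_pow, inv_pow, pow_root, pow_root, inv_one, mul_one]
  have huv_inv_eq_one : u * v⁻¹ = 1 ↔ p = r := by
    rw [mul_inv_eq_one₀ (pow_ne_zero _ (hζ.ne_zero (by omega))), Fin.ext_iff]
    exact ⟨fun h ↦ by have := hζ.pow_inj (by omega) (by omega) h; omega,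
      fun h ↦ by simp only [u, h]⟩
  rw [mul_apply, Matrix.smul_apply, one_apply]
  simp only [transpose_apply, entry]
  rw [sum_sub_distrib, Fin.sum_univ_eq_sum_range (fun q ↦ (u * v) ^ (q + 1) + (u * v)⁻¹ ^ (q + 1)),
    Fin.sum_univ_eq_sum_range (fun q ↦ (u * v⁻¹) ^ (q + 1) + (u * v⁻¹)⁻¹ ^ (q + 1)),
    sum_pow_add_inv_pow_of_ne_one huv_pow huv]
  by_cases hpr : p = r
  · rw [huv_inv_eq_one.mpr hpr, sum_pow_add_inv_pow_one, if_pos hpr]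
    push_cast
    ring
  · rw [sum_pow_add_inv_pow_of_ne_one huv_inv_pow (huv_inv_eq_one.not.mpr hpr), if_neg hpr]
    simp

lemma det_sineMatrix_sq {ζ : K} {l m : ℕ} (hζ : IsPrimitiveRoot ζ l) (hl : l = 2 * m + 1) :
    (sineMatrix ζ m).det ^ 2 = (-(l : K)) ^ m := by
  rw [sq]
  nth_rw 2 [← det_transpose (sineMatrix ζ m)]
  rw [← det_mul, sineMatrix_mul_transpose hζ hl, det_smul, det_one, mul_one, Fintype.card_fin]

theorem det_sq_eq_neg_l_pow_general (l : ℕ) (hodd : Odd l)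
    (ζ : ℂ) (hζ : ζ = Complex.exp (2 * Real.pi * Complex.I / l))
    (M : Matrix (Fin ((l - 1) / 2)) (Fin ((l - 1) / 2)) ℂ)
    (hM : ∀ p q, M p q =
      ζ ^ ((p.1 + 1) * (q.1 + 1)) - ζ⁻¹ ^ ((p.1 + 1) * (q.1 + 1))) :
    M.det ^ 2 = (-(l : ℂ)) ^ ((l - 1) / 2) ∧ M.det ≠ 0 := by
  have hl : l = 2 * ((l - 1) / 2) + 1 := by obtain ⟨k, rfl⟩ := hodd; omega
  have hprim : IsPrimitiveRoot ζ l := hζ ▸ Complex.isPrimitiveRoot_exp l (by omega)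
  have hM_eq : M = sineMatrix ζ ((l - 1) / 2) := Matrix.ext hM
  have hsq : M.det ^ 2 = (-(l : ℂ)) ^ ((l - 1) / 2) := hM_eq ▸ det_sineMatrix_sq hprim hl
  have hl0 : (l : ℂ) ≠ 0 := Nat.cast_ne_zero.mpr (by omega)
  exact ⟨hsq, ne_zero_pow two_ne_zero (hsq ▸ pow_ne_zero _ (neg_ne_zero.mpr hl0))⟩

/-- Let `l ≥ 3` be an odd integer and `ζ = exp(2πi/l)`.  The square of the determinant of the
`((l-1)/2) × ((l-1)/2)` matrix with entries `ζ^{pq} - ζ^{-pq}` (for `1 ≤ p, q ≤ (l-1)/2`)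
equals `(-l)^{(l-1)/2}`; in particular the determinant is nonzero. -/
theorem det_sq_eq_neg_l_pow (l : ℕ) (hl : 3 ≤ l) (hodd : Odd l)
    (ζ : ℂ) (hζ : ζ = Complex.exp (2 * Real.pi * Complex.I / l))
    (M : Matrix (Fin ((l - 1) / 2)) (Fin ((l - 1) / 2)) ℂ)
    (hM : ∀ p q, M p q =
      ζ ^ ((p.1 + 1) * (q.1 + 1)) - ζ⁻¹ ^ ((p.1 + 1) * (q.1 + 1))) :
    M.det ^ 2 = (-(l : ℂ)) ^ ((l - 1) / 2) ∧ M.det ≠ 0 :=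
  det_sq_eq_neg_l_pow_general l hodd ζ hζ M hM
end

section
/- Let l ≥ 3 be an odd integer, ζ = exp(2πi/l) ∈ ℂ, and k = (l+1)/2. Let x₁, …, x_k ∈ ℂ and let N be the k × k complex matrix with entries N_{p,q} = ζ^{pq} − ζ^{−pq} for 1 ≤ q ≤ k−1 and N_{p,k} = x_p, for 1 ≤ p ≤ k. Then det N = (x_{k−1} + x_k) · det M, where M is the (k−1) × (k−1) matrix with entries M_{p,q} = ζ^{pq} − ζ^{−pq} for 1 ≤ p, q ≤ k−1. -/
/-!
Since `l = k + (k - 1)` and `ζ ^ l = 1`, we have `ζ⁻¹ ^ (k q) = ζ ^ ((k - 1) q)` and vice versa, so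
the first `k - 1` entries of row `k` of `N` are the negatives of those of row `k - 1`. Adding row
`k - 1` to row `k` leaves `(0, …, 0, x_{k-1} + x_k)` as last row, and expanding along it gives
`(x_{k-1} + x_k) · det M`.
-/

namespace Matrix

variable {R : Type*} [CommRing R] {n : ℕ}

theorem det_eq_mul_det_of_last_row_eq_zero (A : Matrix (Fin (n + 1)) (Fin (n + 1)) R)
    (h : ∀ j : Fin n, A (Fin.last n) j.castSucc = 0) :
    A.det = A (Fin.last n) (Fin.last n) * (A.submatrix Fin.castSucc Fin.castSucc).det := by
  rw [det_succ_row A (Fin.last n), Fin.sum_univ_castSucc]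
  simp [h, Fin.succAbove_last, ← two_mul, pow_mul]

theorem det_eq_mul_det_of_last_row_add_eq_zero (A : Matrix (Fin (n + 1)) (Fin (n + 1)) R)
    (i : Fin n) (h : ∀ j : Fin n, A (Fin.last n) j.castSucc + A i.castSucc j.castSucc = 0) :
    A.det = (A (Fin.last n) (Fin.last n) + A i.castSucc (Fin.last n)) *
      (A.submatrix Fin.castSucc Fin.castSucc).det := by
  rw [← det_updateRow_add_self A i.castSucc_lt_last.ne',
    det_eq_mul_det_of_last_row_eq_zero _ (by simpa using h), ← Fin.succAbove_last,
    submatrix_updateRow_succAbove]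
  simp

end Matrix

theorem sub_inv_pow_add_sub_inv_pow_eq_zero {K : Type*} [DivisionRing K] {ζ : K} {a b : ℕ}
    (h : ζ ^ (a + b) = 1) : ζ ^ a - ζ⁻¹ ^ a + (ζ ^ b - ζ⁻¹ ^ b) = 0 := by
  have hab : ζ ^ a * ζ ^ b = 1 := by rw [← pow_add, h]
  rw [inv_pow, inv_pow, inv_eq_of_mul_eq_one_right hab, inv_eq_of_mul_eq_one_left hab]
  abel

/-- Let `l ≥ 3` be odd, `ζ = exp(2πi/l)`, `k = (l+1)/2`.  If `N` is the `k × k` matrix whose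
`(p,q)` entry is `ζ^{pq} - ζ^{-pq}` for `1 ≤ q ≤ k-1` and whose last column is `x_p`
(`1 ≤ p ≤ k`), then `det N = (x_{k-1} + x_k) · det M`, where `M` is the `(k-1) × (k-1)`
matrix with entries `ζ^{pq} - ζ^{-pq}` for `1 ≤ p, q ≤ k-1`. -/
theorem det_bordered_eq (l : ℕ) (hl : 3 ≤ l) (hodd : Odd l)
    (k : ℕ) (hk : k = (l + 1) / 2)
    (ζ : ℂ) (hζ : ζ = Complex.exp (2 * Real.pi * Complex.I / l))
    (x : ℕ → ℂ)
    (N : Matrix (Fin k) (Fin k) ℂ)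
    (hN : ∀ p q : Fin k, N p q =
      if q.1 + 1 ≤ k - 1 then
        ζ ^ ((p.1 + 1) * (q.1 + 1)) - ζ⁻¹ ^ ((p.1 + 1) * (q.1 + 1))
      else x (p.1 + 1))
    (M : Matrix (Fin (k - 1)) (Fin (k - 1)) ℂ)
    (hM : ∀ p q, M p q =
      ζ ^ ((p.1 + 1) * (q.1 + 1)) - ζ⁻¹ ^ ((p.1 + 1) * (q.1 + 1))) :
    N.det = (x (k - 1) + x k) * M.det := by
  obtain ⟨n, rfl⟩ : ∃ n, k = n + 2 := ⟨k - 2, by omega⟩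
  have hl' : l = (n + 2) + (n + 1) := by obtain ⟨t, rfl⟩ := hodd; omega
  have hζl : ζ ^ l = 1 := hζ ▸ (Complex.isPrimitiveRoot_exp l (by omega)).pow_eq_one
  have hrows (j : Fin (n + 1)) :
      N (Fin.last (n + 1)) j.castSucc + N (Fin.last n).castSucc j.castSucc = 0 := by
    have hj : j.1 + 1 ≤ n + 2 - 1 := by omega
    simp only [hN, Fin.val_last, Fin.val_castSucc, hj, if_true]
    apply sub_inv_pow_add_sub_inv_pow_eq_zero
    rw [← add_mul, ← hl', pow_mul, hζl, one_pow]
  have hminor : N.submatrix Fin.castSucc Fin.castSucc = M := by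
    ext p q
    simp [hN, hM, Nat.succ_le_succ q.is_le]
  rw [N.det_eq_mul_det_of_last_row_add_eq_zero (Fin.last n) hrows, hminor]
  congr 1
  simp [hN]
  exact add_comm _ _
end

section
/- Let ζ = exp(2πi/7) ∈ ℂ and let I₁, I₂, I₃, I₄, J₁, J₂, J₃, J₄ be arbitrary complex numbers. Then the determinant of the 4 × 4 matrix whose (p,q)-entry is i(ζ^{pq} − ζ^{−pq})I_p for 1 ≤ q ≤ 3 and whose (p,4)-entry is J_p (for 1 ≤ p ≤ 4) equals 7√7·(I₁I₂I₄J₃ + I₁I₂I₃J₄). -/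
/-!
Write `s k = ζ ^ k - ζ⁻¹ ^ k`. Since `ζ ^ 7 = 1` we have `s (k + 7) = s k` and `s (7 - k) = -s k`,
so with `a, b, c = s 1, s 2, s 3` the last two rows of the `4 × 3` block of sines are
`(c, -a, b)` and `(-c, a, -b)`. Only `J₃` and `J₄` survive the Laplace expansion along the last
column, both with the factor `-(a³ + b³ - c³ + 3abc)`. From `s k ^ 3 = s (3k) - 3 s k` and the
product-to-sum formula `abc = c - a - b` one gets `a³ + b³ - c³ = 4abc`, so the minor is `-7abc`.
Finally `i·abc = 8 sin(2π/7) sin(4π/7) sin(6π/7) ≥ 0`, and `abc` is, up to sign, the quadratic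
Gauss sum of `ζ`, whose square is `-7`; hence `i·abc = √7`.
-/

open Complex

section PowSubInvPow

variable {K : Type*} [Field K] {ζ : K} {n k : ℕ}

theorem inv_pow_eq_pow_sub_of_pow_eq_one (h : ζ ^ n = 1) (hk : k ≤ n) :
    ζ⁻¹ ^ k = ζ ^ (n - k) := by
  rw [inv_pow]
  refine inv_eq_of_mul_eq_one_left ?_
  rw [← pow_add, Nat.sub_add_cancel hk, h]

theorem pow_sub_sub_inv_pow_sub_of_pow_eq_one (h : ζ ^ n = 1) (hk : k ≤ n) :
    ζ ^ (n - k) - ζ⁻¹ ^ (n - k) = -(ζ ^ k - ζ⁻¹ ^ k) := by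
  have h' : ζ⁻¹ ^ n = 1 := by rw [inv_pow, h, inv_one]
  have h'k := inv_pow_eq_pow_sub_of_pow_eq_one h' hk
  rw [inv_inv] at h'k
  rw [← inv_pow_eq_pow_sub_of_pow_eq_one h hk, ← h'k]
  ring

theorem pow_add_sub_inv_pow_add_of_pow_eq_one (h : ζ ^ n = 1) :
    ζ ^ (k + n) - ζ⁻¹ ^ (k + n) = ζ ^ k - ζ⁻¹ ^ k := by
  simp [pow_add, h, inv_pow]

theorem pow_sub_inv_pow_cube (ζ : K) (k : ℕ) :
    (ζ ^ k - ζ⁻¹ ^ k) ^ 3 = (ζ ^ (3 * k) - ζ⁻¹ ^ (3 * k)) - 3 * (ζ ^ k - ζ⁻¹ ^ k) := by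
  rw [inv_pow, inv_pow, pow_mul']
  rcases eq_or_ne (ζ ^ k) 0 with h | h
  · simp [h]
  · field_simp
    ring

end PowSubInvPow

section SeventhRoots

variable {K : Type*} [Field K] {ζ : K}

theorem prod_pow_sub_inv_pow_eq_of_pow_seven_eq_one (h7 : ζ ^ 7 = 1) :
    (ζ - ζ⁻¹) * (ζ ^ 2 - ζ⁻¹ ^ 2) * (ζ ^ 3 - ζ⁻¹ ^ 3)
      = (ζ ^ 3 - ζ⁻¹ ^ 3) - (ζ - ζ⁻¹) - (ζ ^ 2 - ζ⁻¹ ^ 2) := by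
  have hζ : ζ ≠ 0 := by rintro rfl; norm_num at h7
  have hprod_to_sum : (ζ - ζ⁻¹) * (ζ ^ 2 - ζ⁻¹ ^ 2) * (ζ ^ 3 - ζ⁻¹ ^ 3)
      = (ζ ^ 6 - ζ⁻¹ ^ 6) - (ζ ^ 4 - ζ⁻¹ ^ 4) - (ζ ^ 2 - ζ⁻¹ ^ 2) := by
    field_simp
    ring
  rw [hprod_to_sum, pow_sub_sub_inv_pow_sub_of_pow_eq_one h7 (k := 1) (by norm_num),
    pow_sub_sub_inv_pow_sub_of_pow_eq_one h7 (k := 3) (by norm_num), pow_one]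
  ring

theorem cube_add_cube_sub_cube_eq_of_pow_seven_eq_one (h7 : ζ ^ 7 = 1) :
    (ζ - ζ⁻¹) ^ 3 + (ζ ^ 2 - ζ⁻¹ ^ 2) ^ 3 - (ζ ^ 3 - ζ⁻¹ ^ 3) ^ 3
      = 4 * ((ζ - ζ⁻¹) * (ζ ^ 2 - ζ⁻¹ ^ 2) * (ζ ^ 3 - ζ⁻¹ ^ 3)) := by
  have h6 : ζ ^ 6 - ζ⁻¹ ^ 6 = -(ζ ^ 1 - ζ⁻¹ ^ 1) :=
    pow_sub_sub_inv_pow_sub_of_pow_eq_one h7 (k := 1) (by norm_num)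
  have h9 : ζ ^ 9 - ζ⁻¹ ^ 9 = ζ ^ 2 - ζ⁻¹ ^ 2 := pow_add_sub_inv_pow_add_of_pow_eq_one h7
  have hcube₁ := pow_sub_inv_pow_cube ζ 1
  have hcube₂ := pow_sub_inv_pow_cube ζ 2
  have hcube₃ := pow_sub_inv_pow_cube ζ 3
  linear_combination hcube₁ + hcube₂ - hcube₃ + h6 - h9
    - 4 * prod_pow_sub_inv_pow_eq_of_pow_seven_eq_one h7

theorem IsPrimitiveRoot.prod_pow_sub_inv_pow_sq_eq_neg_seven (hζ : IsPrimitiveRoot ζ 7) :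
    ((ζ - ζ⁻¹) * (ζ ^ 2 - ζ⁻¹ ^ 2) * (ζ ^ 3 - ζ⁻¹ ^ 3)) ^ 2 = -7 := by
  have h7 := hζ.pow_eq_one
  have hsum : 1 + ζ + ζ ^ 2 + ζ ^ 3 + ζ ^ 4 + ζ ^ 5 + ζ ^ 6 = 0 := by
    simpa [Finset.sum_range_succ] using hζ.geom_sum_eq_zero (by norm_num)
  have hinv₁ : ζ⁻¹ ^ 1 = ζ ^ 6 := inv_pow_eq_pow_sub_of_pow_eq_one h7 (by norm_num)
  have hinv₂ : ζ⁻¹ ^ 2 = ζ ^ 5 := inv_pow_eq_pow_sub_of_pow_eq_one h7 (by norm_num)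
  have hinv₃ : ζ⁻¹ ^ 3 = ζ ^ 4 := inv_pow_eq_pow_sub_of_pow_eq_one h7 (by norm_num)
  -- the Gauss periods `ζ + ζ² + ζ⁴` and `ζ³ + ζ⁵ + ζ⁶` of the squares and non-squares mod 7
  have hperiod_add : (ζ + ζ ^ 2 + ζ ^ 4) + (ζ ^ 3 + ζ ^ 5 + ζ ^ 6) = -1 := by
    linear_combination hsum
  have hperiod_mul : (ζ + ζ ^ 2 + ζ ^ 4) * (ζ ^ 3 + ζ ^ 5 + ζ ^ 6) = 2 := by
    linear_combination (3 + ζ + ζ ^ 2 + ζ ^ 3) * h7 + hsum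
  rw [prod_pow_sub_inv_pow_eq_of_pow_seven_eq_one h7, hinv₂, hinv₃, ← pow_one ζ⁻¹, hinv₁]
  linear_combination ((ζ + ζ ^ 2 + ζ ^ 4) + (ζ ^ 3 + ζ ^ 5 + ζ ^ 6) - 1) * hperiod_add
    - 4 * hperiod_mul

end SeventhRoots

theorem Matrix.det_heptagon_pattern {R : Type*} [CommRing R]
    (t a b c I₁ I₂ I₃ I₄ J₁ J₂ J₃ J₄ : R) :
    Matrix.det !![t * a * I₁, t * b * I₁, t * c * I₁, J₁;
        t * b * I₂, t * -c * I₂, t * -a * I₂, J₂;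
        t * c * I₃, t * -a * I₃, t * b * I₃, J₃;
        t * -c * I₄, t * a * I₄, t * -b * I₄, J₄]
      = -t ^ 3 * (a ^ 3 + b ^ 3 - c ^ 3 + 3 * (a * b * c)) *
          (I₁ * I₂ * I₄ * J₃ + I₁ * I₂ * I₃ * J₄) := by
  rw [Matrix.det_succ_row_zero]
  simp [Fin.sum_univ_succ, Matrix.det_fin_three]
  simp [Fin.succAbove]
  ring

theorem Matrix.det_heptagon {K : Type*} [Field K] {ζ : K} (h7 : ζ ^ 7 = 1)
    (t I₁ I₂ I₃ I₄ J₁ J₂ J₃ J₄ : K) :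
    Matrix.det
      !![t * (ζ - ζ⁻¹) * I₁, t * (ζ ^ 2 - ζ⁻¹ ^ 2) * I₁, t * (ζ ^ 3 - ζ⁻¹ ^ 3) * I₁, J₁;
         t * (ζ ^ 2 - ζ⁻¹ ^ 2) * I₂, t * (ζ ^ 4 - ζ⁻¹ ^ 4) * I₂, t * (ζ ^ 6 - ζ⁻¹ ^ 6) * I₂, J₂;
         t * (ζ ^ 3 - ζ⁻¹ ^ 3) * I₃, t * (ζ ^ 6 - ζ⁻¹ ^ 6) * I₃, t * (ζ ^ 9 - ζ⁻¹ ^ 9) * I₃, J₃;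
         t * (ζ ^ 4 - ζ⁻¹ ^ 4) * I₄, t * (ζ ^ 8 - ζ⁻¹ ^ 8) * I₄, t * (ζ ^ 12 - ζ⁻¹ ^ 12) * I₄, J₄]
      = -7 * t ^ 3 * ((ζ - ζ⁻¹) * (ζ ^ 2 - ζ⁻¹ ^ 2) * (ζ ^ 3 - ζ⁻¹ ^ 3)) *
          (I₁ * I₂ * I₄ * J₃ + I₁ * I₂ * I₃ * J₄) := by
  have h4 : ζ ^ 4 - ζ⁻¹ ^ 4 = -(ζ ^ 3 - ζ⁻¹ ^ 3) :=
    pow_sub_sub_inv_pow_sub_of_pow_eq_one h7 (k := 3) (by norm_num)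
  have h6 : ζ ^ 6 - ζ⁻¹ ^ 6 = -(ζ ^ 1 - ζ⁻¹ ^ 1) :=
    pow_sub_sub_inv_pow_sub_of_pow_eq_one h7 (k := 1) (by norm_num)
  have h8 : ζ ^ 8 - ζ⁻¹ ^ 8 = ζ ^ 1 - ζ⁻¹ ^ 1 := pow_add_sub_inv_pow_add_of_pow_eq_one h7
  have h9 : ζ ^ 9 - ζ⁻¹ ^ 9 = ζ ^ 2 - ζ⁻¹ ^ 2 := pow_add_sub_inv_pow_add_of_pow_eq_one h7
  have h12 : ζ ^ 12 - ζ⁻¹ ^ 12 = -(ζ ^ 2 - ζ⁻¹ ^ 2) := by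
    rw [pow_add_sub_inv_pow_add_of_pow_eq_one (k := 5) h7,
      pow_sub_sub_inv_pow_sub_of_pow_eq_one h7 (k := 2) (by norm_num)]
  rw [h4, h6, h8, h9, h12, pow_one, pow_one, Matrix.det_heptagon_pattern,
    cube_add_cube_sub_cube_eq_of_pow_seven_eq_one h7]
  ring

theorem Complex.exp_mul_I_pow_sub_inv_pow (θ : ℝ) (k : ℕ) :
    exp (θ * I) ^ k - (exp (θ * I))⁻¹ ^ k = 2 * Real.sin (k * θ) * I := by
  have hpow : exp (θ * I) ^ k = exp ((k * θ : ℝ) * I) := by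
    rw [← exp_nat_mul]; push_cast; ring_nf
  rw [inv_pow, hpow, ← exp_neg, ofReal_sin, two_sin, neg_mul]
  linear_combination (exp ((k * θ : ℝ) * I) - exp (-((k * θ : ℝ) * I))) * I_sq

theorem sqrt_seven_eq_I_mul_prod_pow_sub_inv_pow {ζ : ℂ} (hζ : ζ = exp (2 * Real.pi * I / 7)) :
    (Real.sqrt 7 : ℂ) = I * ((ζ - ζ⁻¹) * (ζ ^ 2 - ζ⁻¹ ^ 2) * (ζ ^ 3 - ζ⁻¹ ^ 3)) := by
  have hprim : IsPrimitiveRoot ζ 7 := by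
    rw [hζ]; exact_mod_cast isPrimitiveRoot_exp 7 (by norm_num)
  obtain ⟨θ, hθ⟩ : ∃ θ : ℝ, θ = 2 * Real.pi / 7 := ⟨_, rfl⟩
  have hζθ : ζ = exp (θ * I) := by rw [hζ, hθ]; push_cast; ring_nf
  have hsub : exp (θ * I) - (exp (θ * I))⁻¹ = 2 * Real.sin θ * I := by
    simpa using exp_mul_I_pow_sub_inv_pow θ 1
  have hprod : I * ((ζ - ζ⁻¹) * (ζ ^ 2 - ζ⁻¹ ^ 2) * (ζ ^ 3 - ζ⁻¹ ^ 3))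
      = ((8 * Real.sin θ * Real.sin (2 * θ) * Real.sin (3 * θ) : ℝ) : ℂ) := by
    rw [hζθ, hsub, exp_mul_I_pow_sub_inv_pow, exp_mul_I_pow_sub_inv_pow]
    push_cast [-ofReal_sin]
    linear_combination
      (8 * Real.sin θ * Real.sin (2 * θ) * Real.sin (3 * θ) * (I ^ 2 - 1) : ℂ) * I_sq
  have hsq : ((8 * Real.sin θ * Real.sin (2 * θ) * Real.sin (3 * θ) : ℝ) : ℂ) ^ 2 = 7 := by
    rw [← hprod, mul_pow, I_sq, hprim.prod_pow_sub_inv_pow_sq_eq_neg_seven]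
    norm_num
  have hsin_nonneg (k : ℝ) (hk₀ : 0 ≤ k) (hk₃ : k ≤ 3) : 0 ≤ Real.sin (k * θ) := by
    apply Real.sin_nonneg_of_nonneg_of_le_pi <;> nlinarith [Real.pi_pos]
  have hnonneg : 0 ≤ 8 * Real.sin θ * Real.sin (2 * θ) * Real.sin (3 * θ) :=
    mul_nonneg (mul_nonneg (mul_nonneg (by norm_num)
      (by simpa using hsin_nonneg 1 (by norm_num) (by norm_num)))
      (hsin_nonneg 2 (by norm_num) (by norm_num))) (hsin_nonneg 3 (by norm_num) (by norm_num))
  rw [hprod, ofReal_inj, Real.sqrt_eq_iff_eq_sq (by norm_num) hnonneg]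
  exact_mod_cast hsq.symm

/-- With `ζ = exp(2πi/7)` and arbitrary complex numbers `I₁, …, I₄, J₁, …, J₄`, the
determinant of the `4 × 4` matrix whose `(p,q)` entry is `i(ζ^{pq} - ζ^{-pq})I_p` for
`1 ≤ q ≤ 3` and whose `(p,4)` entry is `J_p` equals `7√7·(I₁I₂I₄J₃ + I₁I₂I₃J₄)`. -/
theorem det_l7 (ζ : ℂ) (hζ : ζ = Complex.exp (2 * Real.pi * Complex.I / 7))
    (I₁ I₂ I₃ I₄ J₁ J₂ J₃ J₄ : ℂ) :
    Matrix.det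
      !![Complex.I * (ζ - ζ⁻¹) * I₁, Complex.I * (ζ ^ 2 - ζ⁻¹ ^ 2) * I₁,
           Complex.I * (ζ ^ 3 - ζ⁻¹ ^ 3) * I₁, J₁;
         Complex.I * (ζ ^ 2 - ζ⁻¹ ^ 2) * I₂, Complex.I * (ζ ^ 4 - ζ⁻¹ ^ 4) * I₂,
           Complex.I * (ζ ^ 6 - ζ⁻¹ ^ 6) * I₂, J₂;
         Complex.I * (ζ ^ 3 - ζ⁻¹ ^ 3) * I₃, Complex.I * (ζ ^ 6 - ζ⁻¹ ^ 6) * I₃,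
           Complex.I * (ζ ^ 9 - ζ⁻¹ ^ 9) * I₃, J₃;
         Complex.I * (ζ ^ 4 - ζ⁻¹ ^ 4) * I₄, Complex.I * (ζ ^ 8 - ζ⁻¹ ^ 8) * I₄,
           Complex.I * (ζ ^ 12 - ζ⁻¹ ^ 12) * I₄, J₄]
      = 7 * (Real.sqrt 7 : ℂ) * (I₁ * I₂ * I₄ * J₃ + I₁ * I₂ * I₃ * J₄) := by
  have h7 : ζ ^ 7 = 1 := by
    rw [hζ]; exact (isPrimitiveRoot_exp 7 (by norm_num)).pow_eq_one
  rw [Matrix.det_heptagon h7, sqrt_seven_eq_I_mul_prod_pow_sub_inv_pow hζ]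
  linear_combination (-7 * I * ((ζ - ζ⁻¹) * (ζ ^ 2 - ζ⁻¹ ^ 2) * (ζ ^ 3 - ζ⁻¹ ^ 3)) *
    (I₁ * I₂ * I₄ * J₃ + I₁ * I₂ * I₃ * J₄)) * I_sq
end

section
/- Let l ≥ 1 be an integer and t ∈ (0,1) a real number. Then the cubic polynomial q_t(x) = x³ + 9x² + 24tˡx + 16t^{2l} has exactly three real roots, which are distinct and all negative: there exist r₁ < r₂ < r₃ < 0 with q_t(rᵢ) = 0 for i = 1,2,3, q_t(x) > 0 for x ∈ (r₁, r₂), and q_t(x) < 0 for x ∈ (r₂, r₃). -/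
/-! Writing `s = tˡ ∈ (0,1)`, the cubic is `q(x) = x³ + (3x + 4s)²`, so it is negative at `-9` and
at `-4s/3` and positive at `-4s` and at `-s`; the intermediate value theorem gives three roots
`r₁ < r₂ < r₃ < 0`. Three distinct roots of a monic cubic factor it as `(x - r₁)(x - r₂)(x - r₃)`,
from which the remaining claims are read off. -/

section CubicFactorization

variable {R : Type*} [CommRing R] [IsDomain R]

/-- Vieta's formulas, obtained by cancelling `rᵢ - rⱼ` from the differences of the root
equations. -/
theorem cubic_eq_prod_sub_of_roots {b c d r₁ r₂ r₃ : R} (h12 : r₁ ≠ r₂) (h13 : r₁ ≠ r₃)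
    (h23 : r₂ ≠ r₃) (hr₁ : r₁ ^ 3 + b * r₁ ^ 2 + c * r₁ + d = 0)
    (hr₂ : r₂ ^ 3 + b * r₂ ^ 2 + c * r₂ + d = 0) (hr₃ : r₃ ^ 3 + b * r₃ ^ 2 + c * r₃ + d = 0)
    (x : R) : x ^ 3 + b * x ^ 2 + c * x + d = (x - r₁) * (x - r₂) * (x - r₃) := by
  have h₁₂ : r₁ ^ 2 + r₁ * r₂ + r₂ ^ 2 + b * (r₁ + r₂) + c = 0 := by
    refine (mul_eq_zero.mp ?_).resolve_left (sub_ne_zero.mpr h12)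
    linear_combination hr₁ - hr₂
  have h₂₃ : r₂ ^ 2 + r₂ * r₃ + r₃ ^ 2 + b * (r₂ + r₃) + c = 0 := by
    refine (mul_eq_zero.mp ?_).resolve_left (sub_ne_zero.mpr h23)
    linear_combination hr₂ - hr₃
  have hsum : r₁ + r₂ + r₃ + b = 0 := by
    refine (mul_eq_zero.mp ?_).resolve_left (sub_ne_zero.mpr h13)
    linear_combination h₁₂ - h₂₃
  have hpair : r₁ * r₂ + r₁ * r₃ + r₂ * r₃ = c := by
    linear_combination (r₁ + r₂) * hsum - h₁₂
  have hprod : r₁ * r₂ * r₃ = -d := by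
    linear_combination hr₁ - r₁ ^ 2 * hsum + r₁ * hpair
  linear_combination x ^ 2 * hsum - x * hpair + hprod

end CubicFactorization

theorem cubic_roots_and_signs_of_three_roots {b c d r₁ r₂ r₃ : ℝ} (h12 : r₁ < r₂) (h23 : r₂ < r₃)
    (hroots : ∀ r ∈ ({r₁, r₂, r₃} : Set ℝ), r ^ 3 + b * r ^ 2 + c * r + d = 0) :
    (∀ x : ℝ, x ^ 3 + b * x ^ 2 + c * x + d = 0 → x = r₁ ∨ x = r₂ ∨ x = r₃) ∧
      (∀ x ∈ Set.Ioo r₁ r₂, 0 < x ^ 3 + b * x ^ 2 + c * x + d) ∧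
      (∀ x ∈ Set.Ioo r₂ r₃, x ^ 3 + b * x ^ 2 + c * x + d < 0) := by
  have hfac := cubic_eq_prod_sub_of_roots h12.ne (h12.trans h23).ne h23.ne
    (hroots r₁ (by simp)) (hroots r₂ (by simp)) (hroots r₃ (by simp))
  refine ⟨fun x hx => ?_, fun x ⟨hx₁, hx₂⟩ => ?_, fun x ⟨hx₂, hx₃⟩ => ?_⟩
  · simpa [hfac, sub_eq_zero, or_assoc] using hx
  · rw [hfac]
    have : 0 < (x - r₁) * ((r₂ - x) * (r₃ - x)) := by
      have := sub_pos.mpr hx₁; have := sub_pos.mpr hx₂; have := sub_pos.mpr (hx₂.trans h23)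
      positivity
    linarith
  · rw [hfac]
    have : 0 < (x - r₁) * (x - r₂) * (r₃ - x) := by
      have := sub_pos.mpr (h12.trans hx₂); have := sub_pos.mpr hx₂; have := sub_pos.mpr hx₃
      positivity
    linarith

theorem exists_three_negative_roots_of_cubic {s : ℝ} (hs0 : 0 < s) (hs1 : s < 1) :
    ∃ r₁ r₂ r₃ : ℝ, r₁ < r₂ ∧ r₂ < r₃ ∧ r₃ < 0 ∧
      ∀ r ∈ ({r₁, r₂, r₃} : Set ℝ), r ^ 3 + 9 * r ^ 2 + 24 * s * r + 16 * s ^ 2 = 0 := by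
  set q : ℝ → ℝ := fun x => x ^ 3 + 9 * x ^ 2 + 24 * s * x + 16 * s ^ 2
  have hq : Continuous q := by fun_prop
  have hq₁ : q (-9) < 0 := by simp only [q]; nlinarith
  have hq₂ : 0 < q (-(4 * s)) := by simp only [q]; nlinarith [mul_pos hs0 hs0]
  have hq₃ : q (-(4 * s / 3)) < 0 := by simp only [q]; nlinarith [pow_pos hs0 3]
  have hq₄ : 0 < q (-s) := by simp only [q]; nlinarith [mul_pos hs0 hs0]
  obtain ⟨r₁, ⟨-, hr₁⟩, hqr₁⟩ :=
    intermediate_value_Ioo (by linarith) hq.continuousOn ⟨hq₁, hq₂⟩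
  obtain ⟨r₂, ⟨hr₂, hr₂'⟩, hqr₂⟩ :=
    intermediate_value_Ioo' (by linarith) hq.continuousOn ⟨hq₃, hq₂⟩
  obtain ⟨r₃, ⟨hr₃, hr₃'⟩, hqr₃⟩ :=
    intermediate_value_Ioo (by linarith) hq.continuousOn ⟨hq₃, hq₄⟩
  refine ⟨r₁, r₂, r₃, by linarith, by linarith, by linarith, ?_⟩
  rintro r (rfl | rfl | rfl) <;> assumption

/-- For `l ≥ 1` and `t ∈ (0,1)`, the cubic `q_t(x) = x³ + 9x² + 24tˡx + 16t^{2l}` has exactly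
three real roots, which are distinct and all negative: there are `r₁ < r₂ < r₃ < 0` with
`q_t(rᵢ) = 0`, every real root of `q_t` equals some `rᵢ`, `q_t > 0` on `(r₁, r₂)` and
`q_t < 0` on `(r₂, r₃)`. -/
theorem cubic_three_negative_roots (l : ℕ) (hl : 1 ≤ l) (t : ℝ) (ht0 : 0 < t) (ht1 : t < 1) :
    ∃ r₁ r₂ r₃ : ℝ, r₁ < r₂ ∧ r₂ < r₃ ∧ r₃ < 0 ∧
      (∀ r ∈ ({r₁, r₂, r₃} : Set ℝ),
        r ^ 3 + 9 * r ^ 2 + 24 * t ^ l * r + 16 * t ^ (2 * l) = 0) ∧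
      (∀ x : ℝ, x ^ 3 + 9 * x ^ 2 + 24 * t ^ l * x + 16 * t ^ (2 * l) = 0 →
        x = r₁ ∨ x = r₂ ∨ x = r₃) ∧
      (∀ x ∈ Set.Ioo r₁ r₂, 0 < x ^ 3 + 9 * x ^ 2 + 24 * t ^ l * x + 16 * t ^ (2 * l)) ∧
      (∀ x ∈ Set.Ioo r₂ r₃, x ^ 3 + 9 * x ^ 2 + 24 * t ^ l * x + 16 * t ^ (2 * l) < 0) := by
  rw [mul_comm 2 l, pow_mul]
  obtain ⟨r₁, r₂, r₃, h12, h23, h3, hroots⟩ :=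
    exists_three_negative_roots_of_cubic (pow_pos ht0 l) (pow_lt_one₀ ht0.le ht1 (by omega))
  exact ⟨r₁, r₂, r₃, h12, h23, h3, hroots, cubic_roots_and_signs_of_three_roots h12 h23 hroots⟩
end

section
/- Let l ≥ 1 and j ≥ 1 be integers. For t ∈ (0,1) let r₁(t) < r₂(t) < r₃(t) denote the three real roots of q_t(x) = x³ + 9x² + 24tˡx + 16t^{2l}. Then: (i) for each t ∈ (0,1) the improper integral P(t) = ∫_{r₁(t)}^{r₂(t)} dx/√(q_t(x)) converges to a positive real number; (ii) the function t ↦ t^{j−1}·P(t) is integrable on (0,1); and (iii) ∫₀¹ t^{j−1} P(t) dt is a positive real number. -/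
/-!
On `(r₁ t, r₂ t)` the cubic factors as `(x - r₁)(x - r₂)(x - r₃)` and is positive, so the
integrand has only inverse-square-root singularities at the two ends and `P t` is finite and
positive. For integrability in `t` we bound `P t` uniformly. Splitting `(r₁, r₂)` at its midpoint,
the left half contributes at most `2`; on the right half, weighted AM–GM
`u + d ≥ u ^ (1 - 2ε) * d ^ (2ε)` (with `d = r₃ - r₂`) bounds the contribution by
`2 + ε⁻¹ d ^ (-ε)`. Writing the cubic as `x³ + (3x + 4tˡ)²` and checking its sign at
`-4tˡ/3 ± t²ˡ/10` shows `d > t²ˡ/5`, and `ε = 1/(4l)` gives `P t ≤ 4 + 20 l t^(-1/2)`, which is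
integrable on `(0, 1)`. Measurability of `P` comes from rewriting it, for `0 < t < 1`, as an
integral of a jointly measurable function of `(t, x)`.
-/

open MeasureTheory Set intervalIntegral

theorem cubic_eq_mul_sub_of_roots {K : Type*} [Field K] {p q r a b c : K}
    (hab : a ≠ b) (hac : a ≠ c) (hbc : b ≠ c)
    (ha : a ^ 3 + p * a ^ 2 + q * a + r = 0) (hb : b ^ 3 + p * b ^ 2 + q * b + r = 0)
    (hc : c ^ 3 + p * c ^ 2 + q * c + r = 0) (x : K) :
    x ^ 3 + p * x ^ 2 + q * x + r = (x - a) * (x - b) * (x - c) := by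
  have hab' : a ^ 2 + a * b + b ^ 2 + p * (a + b) + q = 0 :=
    mul_left_cancel₀ (sub_ne_zero.2 hab) (by linear_combination ha - hb)
  have hac' : a ^ 2 + a * c + c ^ 2 + p * (a + c) + q = 0 :=
    mul_left_cancel₀ (sub_ne_zero.2 hac) (by linear_combination ha - hc)
  have hsum : a + b + c + p = 0 :=
    mul_left_cancel₀ (sub_ne_zero.2 hbc) (by linear_combination hab' - hac')
  linear_combination ha + (x - a) * hab' + (x ^ 2 - (a + b) * x + a * b) * hsum

section CubicSigns

variable {R : Type*} [CommRing R] [LinearOrder R] [IsStrictOrderedRing R] {a b c x : R}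

theorem mul_sub_pos_of_mem_Ioo (hx : x ∈ Ioo a b) (hbc : b < c) :
    0 < (x - a) * (x - b) * (x - c) :=
  mul_pos_of_neg_of_neg (mul_neg_of_pos_of_neg (sub_pos.2 hx.1) (sub_neg.2 hx.2))
    (sub_neg.2 (hx.2.trans hbc))

theorem mul_sub_nonpos_of_notMem_Ioo (hab : a ≤ b) (hxc : x ≤ c) (hx : x ∉ Ioo a b) :
    (x - a) * (x - b) * (x - c) ≤ 0 := by
  refine mul_nonpos_of_nonneg_of_nonpos ?_ (sub_nonpos.2 hxc)
  rcases not_and_or.1 hx with hxa | hbx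
  · have hxa := not_lt.1 hxa
    exact mul_nonneg_of_nonpos_of_nonpos (sub_nonpos.2 hxa) (sub_nonpos.2 (hxa.trans hab))
  · have hbx := not_lt.1 hbx
    exact mul_nonneg (sub_nonneg.2 (hab.trans hbx)) (sub_nonneg.2 hbx)

theorem lt_and_lt_of_mul_sub_neg (hax : a < x) (hbc : b < c)
    (h : (x - a) * (x - b) * (x - c) < 0) : b < x ∧ x < c := by
  rw [mul_assoc] at h
  rcases mul_neg_iff.1 (neg_of_mul_neg_right h (sub_pos.2 hax).le) with ⟨hb, hc⟩ | ⟨hb, hc⟩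
  · exact ⟨sub_pos.1 hb, sub_neg.1 hc⟩
  · exact absurd (hbc.trans ((sub_pos.1 hc).trans (sub_neg.1 hb))) (lt_irrefl b)

end CubicSigns

section PowerSingularity

variable {α β r C : ℝ}

theorem intervalIntegrable_rpow_sub_left (hr : -1 < r) :
    IntervalIntegrable (fun x => (x - α) ^ r) volume α β := by
  simpa using (intervalIntegrable_rpow' hr (a := 0) (b := β - α)).comp_sub_right α

theorem intervalIntegrable_rpow_sub_right (hr : -1 < r) :
    IntervalIntegrable (fun x => (β - x) ^ r) volume α β := by
  simpa using (intervalIntegrable_rpow' hr (a := β - α) (b := 0)).comp_sub_left β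

theorem integral_rpow_sub_left (hr : -1 < r) :
    ∫ x in α..β, (x - α) ^ r = (β - α) ^ (r + 1) / (r + 1) := by
  rw [intervalIntegral.integral_comp_sub_right (fun x => x ^ r), integral_rpow (Or.inl hr),
    sub_self, Real.zero_rpow (by linarith), sub_zero]

theorem integral_rpow_sub_right (hr : -1 < r) :
    ∫ x in α..β, (β - x) ^ r = (β - α) ^ (r + 1) / (r + 1) := by
  rw [intervalIntegral.integral_comp_sub_left (fun x => x ^ r), integral_rpow (Or.inl hr),
    sub_self, Real.zero_rpow (by linarith), sub_zero]

theorem intervalIntegrable_and_integral_le_of_norm_le {f g : ℝ → ℝ} (hαβ : α ≤ β)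
    (hf : AEStronglyMeasurable f) (hg : IntervalIntegrable g volume α β)
    (h : ∀ x ∈ Ioo α β, ‖f x‖ ≤ g x) :
    IntervalIntegrable f volume α β ∧ ∫ x in α..β, f x ≤ ∫ x in α..β, g x := by
  have hfi : IntervalIntegrable f volume α β := by
    refine hg.mono_fun' hf.restrict ?_
    rw [uIoc_of_le hαβ, ← Measure.restrict_congr_set Ioo_ae_eq_Ioc]
    exact ae_restrict_of_forall_mem measurableSet_Ioo h
  exact ⟨hfi, intervalIntegral.integral_mono_on_of_le_Ioo hαβ hfi hg
    fun x hx => (Real.le_norm_self _).trans (h x hx)⟩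

theorem integral_le_of_norm_le_mul_rpow_sub_left {f : ℝ → ℝ} (hαβ : α ≤ β) (hr : -1 < r)
    (hf : AEStronglyMeasurable f) (h : ∀ x ∈ Ioo α β, ‖f x‖ ≤ C * (x - α) ^ r) :
    IntervalIntegrable f volume α β ∧ ∫ x in α..β, f x ≤ C * ((β - α) ^ (r + 1) / (r + 1)) := by
  rw [← integral_rpow_sub_left hr, ← intervalIntegral.integral_const_mul]
  exact intervalIntegrable_and_integral_le_of_norm_le hαβ hf
    ((intervalIntegrable_rpow_sub_left hr).const_mul C) h

theorem integral_le_of_norm_le_mul_rpow_sub_right {f : ℝ → ℝ} (hαβ : α ≤ β) (hr : -1 < r)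
    (hf : AEStronglyMeasurable f) (h : ∀ x ∈ Ioo α β, ‖f x‖ ≤ C * (β - x) ^ r) :
    IntervalIntegrable f volume α β ∧ ∫ x in α..β, f x ≤ C * ((β - α) ^ (r + 1) / (r + 1)) := by
  rw [← integral_rpow_sub_right hr, ← intervalIntegral.integral_const_mul]
  exact intervalIntegrable_and_integral_le_of_norm_le hαβ hf
    ((intervalIntegrable_rpow_sub_right hr).const_mul C) h

end PowerSingularity

theorem one_div_sqrt_le_of_mul_rpow_le {P K y p : ℝ} (hK : 0 < K) (hy : 0 < y)
    (h : K * y ^ p ≤ P) : 1 / √P ≤ K ^ (-(1 / 2) : ℝ) * y ^ (-(p / 2)) := by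
  have hpos : 0 < K * y ^ p := by positivity
  calc 1 / √P ≤ 1 / √(K * y ^ p) :=
        one_div_le_one_div_of_le (Real.sqrt_pos.2 hpos) (Real.sqrt_le_sqrt h)
    _ = (K * y ^ p) ^ (-(1 / 2) : ℝ) := by
        rw [Real.sqrt_eq_rpow, Real.rpow_neg hpos.le, one_div]
    _ = K ^ (-(1 / 2) : ℝ) * y ^ (-(p / 2)) := by
        rw [Real.mul_rpow hK.le (by positivity), ← Real.rpow_mul hy.le]
        ring_nf

theorem rpow_neg_half_mul_rpow_half_div {E : ℝ} (hE : 0 < E) :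
    E ^ (-(1 / 2) : ℝ) * (E ^ (-(1 / 2) + 1 : ℝ) / (-(1 / 2) + 1)) = 2 := by
  rw [show (-(1 / 2) + 1 : ℝ) = 1 / 2 by norm_num, Real.rpow_neg hE.le]
  field_simp

theorem rpow_mul_rpow_le_mul_add {u d ε : ℝ} (hu : 0 < u) (hd : 0 < d) (hε : 0 ≤ ε)
    (hε' : ε ≤ 1 / 2) : d ^ (2 * ε) * u ^ (2 - 2 * ε) ≤ u * (u + d) := by
  have hamgm : u ^ (1 - 2 * ε) * d ^ (2 * ε) ≤ u + d :=
    (Real.geom_mean_le_arith_mean2_weighted (by linarith) (by linarith) hu.le hd.le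
      (by ring)).trans (by nlinarith)
  rw [show 2 - 2 * ε = 1 + (1 - 2 * ε) by ring, Real.rpow_add hu, Real.rpow_one]
  calc d ^ (2 * ε) * (u * u ^ (1 - 2 * ε)) = u * (u ^ (1 - 2 * ε) * d ^ (2 * ε)) := by ring
    _ ≤ u * (u + d) := by gcongr

theorem mul_rpow_neg_half_mul_rpow_div_le {E d ε : ℝ} (hE : 1 ≤ E) (hd : 0 < d) (hε : 0 ≤ ε)
    (hε' : ε ≤ 1 / 2) : (E * d ^ (2 * ε)) ^ (-(1 / 2) : ℝ) * (E ^ ε / ε) ≤ ε⁻¹ * d ^ (-ε) := by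
  have hE0 : 0 < E := by linarith
  have hE_pow : E ^ (-(1 / 2) : ℝ) * E ^ ε ≤ 1 := by
    rw [← Real.rpow_add hE0]
    exact Real.rpow_le_one_of_one_le_of_nonpos hE (by linarith)
  rw [Real.mul_rpow hE0.le (by positivity), ← Real.rpow_mul hd.le,
    show 2 * ε * (-(1 / 2)) = -ε by ring]
  calc E ^ (-(1 / 2) : ℝ) * d ^ (-ε) * (E ^ ε / ε)
      = (E ^ (-(1 / 2) : ℝ) * E ^ ε) * (ε⁻¹ * d ^ (-ε)) := by ring
    _ ≤ 1 * (ε⁻¹ * d ^ (-ε)) := by gcongr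
    _ = ε⁻¹ * d ^ (-ε) := one_mul _

theorem setIntegral_Ioo_pos {f : ℝ → ℝ} {a b : ℝ} (hab : a < b) (hf : IntegrableOn f (Ioo a b))
    (hpos : ∀ x ∈ Ioo a b, 0 < f x) : 0 < ∫ x in Ioo a b, f x := by
  rw [← integral_Ioc_eq_integral_Ioo, ← intervalIntegral.integral_of_le hab.le]
  exact intervalIntegral_pos_of_pos_on
    ((intervalIntegrable_iff_integrableOn_Ioo_of_le hab.le).2 hf) hpos hab

theorem integrableOn_pow_mul_of_le_add_rpow {P : ℝ → ℝ} {A B r : ℝ} (j : ℕ) (hr : -1 < r)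
    (hP : AEStronglyMeasurable P (volume.restrict (Ioo 0 1)))
    (hbound : ∀ t ∈ Ioo (0 : ℝ) 1, 0 ≤ P t ∧ P t ≤ A + B * t ^ r) :
    IntegrableOn (fun t => t ^ j * P t) (Ioo 0 1) := by
  refine Integrable.mono' (g := fun t => A + B * t ^ r) ?_
    ((continuous_pow j).aestronglyMeasurable.mul hP)
    (ae_restrict_of_forall_mem measurableSet_Ioo fun t ht => ?_)
  · exact (integrableOn_const measure_Ioo_lt_top.ne).add
      (((integrableOn_Ioo_rpow_iff one_pos).2 hr).const_mul B)
  · obtain ⟨h0, hle⟩ := hbound t ht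
    rw [Real.norm_of_nonneg (mul_nonneg (pow_nonneg ht.1.le j) h0)]
    calc t ^ j * P t ≤ 1 * P t := by gcongr; exact pow_le_one₀ ht.1.le ht.2.le
      _ ≤ A + B * t ^ r := by linarith

theorem rpow_neg_inv_le_inv_of_pow_le {y d : ℝ} {n : ℕ} (hy : 0 < y) (hn : n ≠ 0)
    (h : y ^ n ≤ d) : d ^ (-(n : ℝ)⁻¹) ≤ y⁻¹ := by
  calc d ^ (-(n : ℝ)⁻¹) ≤ (y ^ n) ^ (-(n : ℝ)⁻¹) :=
        Real.rpow_le_rpow_of_nonpos (by positivity) h (by simp)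
    _ = y⁻¹ := by rw [Real.rpow_neg (by positivity), Real.pow_rpow_inv_natCast hy.le hn]

section ThreeRoots

variable {a b c : ℝ}

theorem integral_one_div_sqrt_mul_sub_left_half_le (hab : a < b)
    (hc : 1 ≤ c - (a + b) / 2) :
    IntervalIntegrable (fun x => 1 / √((x - a) * (x - b) * (x - c))) volume a ((a + b) / 2) ∧
      ∫ x in a..(a + b) / 2, 1 / √((x - a) * (x - b) * (x - c)) ≤ 2 := by
  set E := (b - a) / 2 with hE_def
  have hE : 0 < E := by positivity
  have hbound : ∀ x ∈ Ioo a ((a + b) / 2), ‖1 / √((x - a) * (x - b) * (x - c))‖ ≤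
      E ^ (-(1 / 2) : ℝ) * (x - a) ^ (-(1 / 2) : ℝ) := by
    rintro x ⟨hax, hxm⟩
    rw [Real.norm_of_nonneg (by positivity)]
    refine one_div_sqrt_le_of_mul_rpow_le (p := 1) hE (sub_pos.2 hax) ?_
    have hbx : E ≤ b - x := by linarith
    have hcx : 1 ≤ c - x := by linarith
    have hE' : E ≤ (b - x) * (c - x) := by nlinarith
    rw [Real.rpow_one]
    nlinarith
  obtain ⟨hi, hle⟩ := integral_le_of_norm_le_mul_rpow_sub_left (by linarith) (by norm_num)
    (by fun_prop : Measurable _).aestronglyMeasurable hbound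
  rw [show (a + b) / 2 - a = E by ring, rpow_neg_half_mul_rpow_half_div hE] at hle
  exact ⟨hi, hle⟩

theorem integral_one_div_sqrt_mul_sub_right_half_le (hab : a < b) (hbc : b < c)
    (hsep : 2 ≤ (b - a) / 2 + (c - b)) {ε : ℝ} (hε : 0 < ε) (hε' : ε ≤ 1 / 2) :
    IntervalIntegrable (fun x => 1 / √((x - a) * (x - b) * (x - c))) volume ((a + b) / 2) b ∧
      ∫ x in (a + b) / 2..b, 1 / √((x - a) * (x - b) * (x - c)) ≤
        2 + ε⁻¹ * (c - b) ^ (-ε) := by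
  set E := (b - a) / 2 with hE_def
  set d := c - b with hd_def
  have hE : 0 < E := by linarith
  have hd : 0 < d := by linarith
  have hmb : (a + b) / 2 ≤ b := by linarith
  have hlen : b - (a + b) / 2 = E := by linarith
  have hmeas : AEStronglyMeasurable (fun x => 1 / √((x - a) * (x - b) * (x - c))) :=
    (by fun_prop : Measurable _).aestronglyMeasurable
  have hfactor : ∀ x, (x - a) * (x - b) * (x - c) = (x - a) * ((b - x) * ((b - x) + d)) :=
    fun x => by rw [hd_def]; ring
  have htail : 0 ≤ ε⁻¹ * d ^ (-ε) := by positivity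
  rcases le_or_gt 1 d with hd1 | hd1
  · have hbound : ∀ x ∈ Ioo ((a + b) / 2) b, ‖1 / √((x - a) * (x - b) * (x - c))‖ ≤
        E ^ (-(1 / 2) : ℝ) * (b - x) ^ (-(1 / 2) : ℝ) := by
      rintro x ⟨hmx, hxb⟩
      rw [Real.norm_of_nonneg (by positivity)]
      refine one_div_sqrt_le_of_mul_rpow_le (p := 1) hE (sub_pos.2 hxb) ?_
      have hxa : E ≤ x - a := by linarith
      have hbx := sub_pos.2 hxb
      rw [Real.rpow_one, hfactor]
      calc E * (b - x) ≤ (x - a) * ((b - x) * 1) := by nlinarith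
        _ ≤ (x - a) * ((b - x) * ((b - x) + d)) := by gcongr <;> linarith
    obtain ⟨hi, hle⟩ := integral_le_of_norm_le_mul_rpow_sub_right hmb (by norm_num) hmeas hbound
    rw [hlen, rpow_neg_half_mul_rpow_half_div hE] at hle
    exact ⟨hi, by linarith⟩
  · have hE1 : 1 ≤ E := by linarith
    have hbound : ∀ x ∈ Ioo ((a + b) / 2) b, ‖1 / √((x - a) * (x - b) * (x - c))‖ ≤
        (E * d ^ (2 * ε)) ^ (-(1 / 2) : ℝ) * (b - x) ^ (-((2 - 2 * ε) / 2)) := by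
      rintro x ⟨hmx, hxb⟩
      rw [Real.norm_of_nonneg (by positivity)]
      have hu := sub_pos.2 hxb
      refine one_div_sqrt_le_of_mul_rpow_le (by positivity) hu ?_
      rw [hfactor, mul_assoc]
      exact mul_le_mul (by linarith) (rpow_mul_rpow_le_mul_add hu hd hε.le hε') (by positivity)
        (by linarith)
    obtain ⟨hi, hle⟩ := integral_le_of_norm_le_mul_rpow_sub_right hmb (by linarith) hmeas hbound
    rw [hlen, show -((2 - 2 * ε) / 2) + 1 = ε by ring] at hle
    exact ⟨hi, by linarith [mul_rpow_neg_half_mul_rpow_div_le hE1 hd hε.le hε']⟩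

theorem integral_one_div_sqrt_mul_sub_le (hab : a < b) (hbc : b < c)
    (hsep : 2 ≤ (b - a) / 2 + (c - b)) {ε : ℝ} (hε : 0 < ε) (hε' : ε ≤ 1 / 2) :
    IntervalIntegrable (fun x => 1 / √((x - a) * (x - b) * (x - c))) volume a b ∧
      ∫ x in a..b, 1 / √((x - a) * (x - b) * (x - c)) ≤ 4 + ε⁻¹ * (c - b) ^ (-ε) := by
  obtain ⟨hiL, hL⟩ := integral_one_div_sqrt_mul_sub_left_half_le (c := c) hab (by linarith)
  obtain ⟨hiR, hR⟩ := integral_one_div_sqrt_mul_sub_right_half_le hab hbc hsep hε hε'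
  refine ⟨hiL.trans hiR, ?_⟩
  rw [← integral_add_adjacent_intervals hiL hiR]
  linarith

theorem integral_one_div_sqrt_mul_sub_pos (hab : a < b) (hbc : b < c)
    (hi : IntervalIntegrable (fun x => 1 / √((x - a) * (x - b) * (x - c))) volume a b) :
    0 < ∫ x in a..b, 1 / √((x - a) * (x - b) * (x - c)) :=
  intervalIntegral_pos_of_pos_on hi
    (fun _ hx => one_div_pos.2 (Real.sqrt_pos.2 (mul_sub_pos_of_mem_Ioo hx hbc))) hab

theorem intervalIntegral_one_div_sqrt_mul_sub_eq_setIntegral_Iio {y : ℝ} (hab : a ≤ b)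
    (hby : b ≤ y) (hyc : y ≤ c) :
    ∫ x in a..b, 1 / √((x - a) * (x - b) * (x - c)) =
      ∫ x in Iio y, 1 / √((x - a) * (x - b) * (x - c)) := by
  rw [intervalIntegral.integral_of_le hab, integral_Ioc_eq_integral_Ioo]
  refine (setIntegral_eq_of_subset_of_forall_sdiff_eq_zero measurableSet_Iio
    (fun x hx => mem_Iio.2 (hx.2.trans_le hby)) fun x hx => ?_).symm
  rw [Real.sqrt_eq_zero'.2 (mul_sub_nonpos_of_notMem_Ioo hab (hx.1.out.le.trans hyc) hx.2),
    div_zero]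

end ThreeRoots

def fiberCubic (s x : ℝ) : ℝ := x ^ 3 + 9 * x ^ 2 + 24 * s * x + 16 * s ^ 2

theorem fiberCubic_pow (l : ℕ) (t x : ℝ) :
    fiberCubic (t ^ l) x = x ^ 3 + 9 * x ^ 2 + 24 * t ^ l * x + 16 * t ^ (2 * l) := by
  rw [fiberCubic, ← pow_mul']

theorem fiberCubic_eq_mul_of_roots {l : ℕ} {t a b c : ℝ} (hab : a < b) (hbc : b < c)
    (hroot : ∀ r ∈ ({a, b, c} : Set ℝ),
      r ^ 3 + 9 * r ^ 2 + 24 * t ^ l * r + 16 * t ^ (2 * l) = 0) (x : ℝ) :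
    fiberCubic (t ^ l) x = (x - a) * (x - b) * (x - c) := by
  have h : ∀ r ∈ ({a, b, c} : Set ℝ), fiberCubic (t ^ l) r = 0 :=
    fun r hr => (fiberCubic_pow l t r).trans (hroot r hr)
  exact cubic_eq_mul_sub_of_roots hab.ne (hab.trans hbc).ne hbc.ne (h a (by simp))
    (h b (by simp)) (h c (by simp)) x

theorem add_add_eq_neg_nine_of_fiberCubic_eq {s a b c : ℝ}
    (hfac : ∀ x, fiberCubic s x = (x - a) * (x - b) * (x - c)) : a + b + c = -9 := by
  have h1 := hfac 1
  have h2 := hfac (-1)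
  have h0 := hfac 0
  simp only [fiberCubic] at h1 h2 h0
  linear_combination (h1 + h2 - 2 * h0) / 2

theorem fiberCubic_root_gap {s a b c : ℝ}
    (hfac : ∀ x, fiberCubic s x = (x - a) * (x - b) * (x - c)) (hs : 0 < s) (hs1 : s < 1)
    (hab : a < b) (hbc : b < c) :
    b < -(4 / 3) * s - s ^ 2 / 10 ∧ -(4 / 3) * s + s ^ 2 / 10 < c := by
  have hsum := add_add_eq_neg_nine_of_fiberCubic_eq hfac
  have hneg : ∀ y, -3 < y → fiberCubic s y < 0 → b < y ∧ y < c := fun y hy h =>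
    lt_and_lt_of_mul_sub_neg (by linarith) hbc (hfac y ▸ h)
  have hs3 := pow_pos hs 3
  have hcube : ∀ w : ℝ, 1 ≤ w → 9 * s / 100 - w ^ 3 < 0 := fun w hw => by
    nlinarith [one_le_pow₀ (n := 3) hw]
  refine ⟨(hneg _ (by nlinarith) ?_).1, (hneg _ (by nlinarith) ?_).2⟩
  · rw [show fiberCubic s (-(4 / 3) * s - s ^ 2 / 10) =
        s ^ 3 * (9 * s / 100 - (4 / 3 + s / 10) ^ 3) by rw [fiberCubic]; ring]
    exact mul_neg_of_pos_of_neg hs3 (hcube _ (by linarith))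
  · rw [show fiberCubic s (-(4 / 3) * s + s ^ 2 / 10) =
        s ^ 3 * (9 * s / 100 - (4 / 3 - s / 10) ^ 3) by rw [fiberCubic]; ring]
    exact mul_neg_of_pos_of_neg hs3 (hcube _ (by linarith))

theorem integral_one_div_sqrt_mul_sub_le_of_fiberCubic {l : ℕ} (hl : 1 ≤ l) {t a b c : ℝ}
    (ht : t ∈ Ioo 0 1) (hab : a < b) (hbc : b < c)
    (hfac : ∀ x, fiberCubic (t ^ l) x = (x - a) * (x - b) * (x - c)) :
    IntervalIntegrable (fun x => 1 / √((x - a) * (x - b) * (x - c))) volume a b ∧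
      ∫ x in a..b, 1 / √((x - a) * (x - b) * (x - c)) ≤ 4 + 20 * l * t ^ (-(1 / 2) : ℝ) := by
  obtain ⟨ht0, ht1⟩ := ht
  have hs1 : t ^ l < 1 := pow_lt_one₀ ht0.le ht1 (by omega)
  obtain ⟨hb, hc⟩ := fiberCubic_root_gap hfac (pow_pos ht0 l) hs1 hab hbc
  have hsum := add_add_eq_neg_nine_of_fiberCubic_eq hfac
  have hn : 4 * l ≠ 0 := by omega
  have hgap : (√t / 5) ^ (4 * l) ≤ c - b :=
    calc (√t / 5) ^ (4 * l) = (t ^ l) ^ 2 / 5 ^ (4 * l) := by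
          rw [div_pow, show 4 * l = 2 * (l * 2) by ring, pow_mul, Real.sq_sqrt ht0.le, pow_mul]
      _ ≤ (t ^ l) ^ 2 / 5 := by gcongr; exact le_self_pow₀ (by norm_num) hn
      _ ≤ c - b := by linarith
  have hε : ((4 * l : ℕ) : ℝ)⁻¹ ≤ 1 / 2 := by
    rw [one_div]
    exact inv_anti₀ two_pos (by exact_mod_cast (by omega : 2 ≤ 4 * l))
  obtain ⟨hi, hle⟩ := integral_one_div_sqrt_mul_sub_le hab hbc (by nlinarith) (by positivity) hε
  have hpow : (c - b) ^ (-((4 * l : ℕ) : ℝ)⁻¹) ≤ 5 * t ^ (-(1 / 2) : ℝ) := by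
    rw [Real.rpow_neg ht0.le, ← Real.sqrt_eq_rpow, ← div_eq_mul_inv, ← inv_div]
    exact rpow_neg_inv_le_inv_of_pow_le (by positivity) hn hgap
  refine ⟨hi, hle.trans ?_⟩
  rw [inv_inv]
  have := mul_le_mul_of_nonneg_left hpow (Nat.cast_nonneg (4 * l))
  push_cast at this ⊢
  linarith

/-- The integrand vanishes where the cubic is negative, so for `0 < t < 1` this equals the
integral over `(r₁ t, r₂ t)`; unlike the latter, it is visibly measurable in `t`. -/
noncomputable def fiberPeriod (l : ℕ) (t : ℝ) : ℝ :=
  ∫ x in Iio (-(4 / 3) * t ^ l), 1 / √(fiberCubic (t ^ l) x)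

theorem stronglyMeasurable_fiberPeriod (l : ℕ) : StronglyMeasurable (fiberPeriod l) := by
  have hF : StronglyMeasurable ({p : ℝ × ℝ | p.2 < -(4 / 3) * p.1 ^ l}.indicator
      fun p => 1 / √(fiberCubic (p.1 ^ l) p.2)) :=
    (Measurable.indicator (by unfold fiberCubic; fun_prop)
      (measurableSet_lt measurable_snd (by fun_prop))).stronglyMeasurable
  convert hF.integral_prod_right' (ν := volume) using 2 with t
  rw [fiberPeriod, ← MeasureTheory.integral_indicator measurableSet_Iio]
  congr 1 with x

theorem integral_one_div_sqrt_mul_sub_eq_fiberPeriod {l : ℕ} (hl : 1 ≤ l) {t a b c : ℝ}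
    (ht : t ∈ Ioo 0 1) (hab : a < b) (hbc : b < c)
    (hfac : ∀ x, fiberCubic (t ^ l) x = (x - a) * (x - b) * (x - c)) :
    ∫ x in a..b, 1 / √((x - a) * (x - b) * (x - c)) = fiberPeriod l t := by
  obtain ⟨hb, hc⟩ := fiberCubic_root_gap hfac (pow_pos ht.1 l)
    (pow_lt_one₀ ht.1.le ht.2 (by omega)) hab hbc
  rw [fiberPeriod]
  simp only [hfac]
  exact intervalIntegral_one_div_sqrt_mul_sub_eq_setIntegral_Iio hab.le (by nlinarith)
    (by nlinarith)

theorem period_integral_Delta_pos_general (l j : ℕ) (hl : 1 ≤ l)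
    (r₁ r₂ r₃ : ℝ → ℝ)
    (hlt : ∀ t ∈ Set.Ioo (0 : ℝ) 1, r₁ t < r₂ t ∧ r₂ t < r₃ t)
    (hroot : ∀ t ∈ Set.Ioo (0 : ℝ) 1, ∀ r ∈ ({r₁ t, r₂ t, r₃ t} : Set ℝ),
      r ^ 3 + 9 * r ^ 2 + 24 * t ^ l * r + 16 * t ^ (2 * l) = 0)
    (P : ℝ → ℝ)
    (hP : ∀ t, P t = ∫ x in (r₁ t)..(r₂ t),
      1 / Real.sqrt (x ^ 3 + 9 * x ^ 2 + 24 * t ^ l * x + 16 * t ^ (2 * l))) :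
    (∀ t ∈ Set.Ioo (0 : ℝ) 1,
      IntervalIntegrable
        (fun x => 1 / Real.sqrt (x ^ 3 + 9 * x ^ 2 + 24 * t ^ l * x + 16 * t ^ (2 * l)))
        volume (r₁ t) (r₂ t) ∧ 0 < P t) ∧
    IntegrableOn (fun t => t ^ (j - 1) * P t) (Set.Ioo (0 : ℝ) 1) volume ∧
    0 < ∫ t in Set.Ioo (0 : ℝ) 1, t ^ (j - 1) * P t := by
  have hfac t (ht : t ∈ Ioo (0 : ℝ) 1) :=
    fiberCubic_eq_mul_of_roots (hlt t ht).1 (hlt t ht).2 (hroot t ht)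
  have hfiber t (ht : t ∈ Ioo (0 : ℝ) 1) :
      IntervalIntegrable
        (fun x => 1 / Real.sqrt (x ^ 3 + 9 * x ^ 2 + 24 * t ^ l * x + 16 * t ^ (2 * l)))
        volume (r₁ t) (r₂ t) ∧
      0 < P t ∧ P t ≤ 4 + 20 * l * t ^ (-(1 / 2) : ℝ) ∧ P t = fiberPeriod l t := by
    obtain ⟨h12, h23⟩ := hlt t ht
    obtain ⟨hi, hle⟩ := integral_one_div_sqrt_mul_sub_le_of_fiberCubic hl ht h12 h23 (hfac t ht)
    simp only [hP, ← fiberCubic_pow, hfac t ht]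
    exact ⟨hi, integral_one_div_sqrt_mul_sub_pos h12 h23 hi, hle,
      integral_one_div_sqrt_mul_sub_eq_fiberPeriod hl ht h12 h23 (hfac t ht)⟩
  have hint : IntegrableOn (fun t => t ^ (j - 1) * P t) (Ioo 0 1) :=
    integrableOn_pow_mul_of_le_add_rpow (j - 1) (by norm_num)
      ((stronglyMeasurable_fiberPeriod l).aestronglyMeasurable.congr
        (ae_restrict_of_forall_mem measurableSet_Ioo fun t ht => (hfiber t ht).2.2.2.symm))
      fun t ht => ⟨(hfiber t ht).2.1.le, (hfiber t ht).2.2.1⟩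
  exact ⟨fun t ht => ⟨(hfiber t ht).1, (hfiber t ht).2.1⟩, hint,
    setIntegral_Ioo_pos one_pos hint fun t ht => mul_pos (pow_pos ht.1 _) (hfiber t ht).2.1⟩

/-- Let `l, j ≥ 1` and for `t ∈ (0,1)` let `r₁(t) < r₂(t) < r₃(t)` be the three real roots of
`q_t(x) = x³ + 9x² + 24tˡx + 16t^{2l}`.  Then (i) the improper integral
`P(t) = ∫_{r₁(t)}^{r₂(t)} dx/√(q_t(x))` converges to a positive real number for each
`t ∈ (0,1)`; (ii) `t ↦ t^{j-1} P(t)` is integrable on `(0,1)`; and (iii)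
`∫₀¹ t^{j-1} P(t) dt > 0`. -/
theorem period_integral_Delta_pos (l j : ℕ) (hl : 1 ≤ l) (hj : 1 ≤ j)
    (r₁ r₂ r₃ : ℝ → ℝ)
    (hlt : ∀ t ∈ Set.Ioo (0 : ℝ) 1, r₁ t < r₂ t ∧ r₂ t < r₃ t)
    (hroot : ∀ t ∈ Set.Ioo (0 : ℝ) 1, ∀ r ∈ ({r₁ t, r₂ t, r₃ t} : Set ℝ),
      r ^ 3 + 9 * r ^ 2 + 24 * t ^ l * r + 16 * t ^ (2 * l) = 0)
    (hall : ∀ t ∈ Set.Ioo (0 : ℝ) 1, ∀ x : ℝ,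
      x ^ 3 + 9 * x ^ 2 + 24 * t ^ l * x + 16 * t ^ (2 * l) = 0 →
        x = r₁ t ∨ x = r₂ t ∨ x = r₃ t)
    (P : ℝ → ℝ)
    (hP : ∀ t, P t = ∫ x in (r₁ t)..(r₂ t),
      1 / Real.sqrt (x ^ 3 + 9 * x ^ 2 + 24 * t ^ l * x + 16 * t ^ (2 * l))) :
    (∀ t ∈ Set.Ioo (0 : ℝ) 1,
      IntervalIntegrable
        (fun x => 1 / Real.sqrt (x ^ 3 + 9 * x ^ 2 + 24 * t ^ l * x + 16 * t ^ (2 * l)))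
        volume (r₁ t) (r₂ t) ∧ 0 < P t) ∧
    IntegrableOn (fun t => t ^ (j - 1) * P t) (Set.Ioo (0 : ℝ) 1) volume ∧
    0 < ∫ t in Set.Ioo (0 : ℝ) 1, t ^ (j - 1) * P t :=
  period_integral_Delta_pos_general l j hl r₁ r₂ r₃ hlt hroot P hP
end
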